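/- (Learning-rate-scaled Neumann-SGD, limit.) Fix a learning rate α > 0, a point λ₀ ∈ Λ, and w₀* ∈ W with g(λ₀, w₀*) = 0. Let w_0 : Λ → W be the constant function with value w₀*, and define w_{i+1}(λ) = w_i(λ) − α·g(λ, w_i(λ)). Write H = H(λ₀, w₀*) and M = M(λ₀, w₀*). If the operator norm of I − α·H is strictly less than 1, then H is invertible and lim_{i→∞} D w_{i+1}(λ₀) = −H⁻¹ ∘ M; in particular the limiting derivative of unrolled SGD recovers the implicit function theorem formula −H⁻¹ ∘ M independently of α. -/

import Mathlib

open Topology Filter ContinuousLinearMap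

/-!
Differentiating the recursion `w_{i+1}(λ) = w_i(λ) - α g(λ, w_i(λ))` at `λ₀` by the chain rule, and
using that every iterate stays at the fixed point `w₀*` there, the Jacobians satisfy the affine
recursion `J_{i+1} = (I - α H) J_i - α M` with `J_0 = 0`. Its unique fixed point is `-H⁻¹ M`, and the
error `J_i + H⁻¹ M = -(I - α H)^i H⁻¹ M` tends to zero because `‖I - α H‖ < 1`. The same bound makes
`α H = I - (I - α H)` invertible through its Neumann series, hence `H` too.
-/

theorem sgd_iterate_apply_eq {R E F : Type*} [AddGroup F] [SMulZeroClass R F] {g : E → F → F}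
    {x₀ : E} {y₀ : F} {α : R} {w : ℕ → E → F} (hfix : g x₀ y₀ = 0) (hw0 : w 0 = fun _ => y₀)
    (hrec : ∀ i x, w (i + 1) x = w i x - α • g x (w i x)) (i : ℕ) : w i x₀ = y₀ := by
  induction i with
  | zero => rw [hw0]
  | succ i ih => rw [hrec, ih, hfix, smul_zero, sub_zero]

section Calculus

variable {𝕜 : Type*} [NontriviallyNormedField 𝕜]
  {E F G : Type*} [NormedAddCommGroup E] [NormedSpace 𝕜 E] [NormedAddCommGroup F] [NormedSpace 𝕜 F]
  [NormedAddCommGroup G] [NormedSpace 𝕜 G]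

theorem hasFDerivAt_comp_prodMk_of_differentiableAt {g : E → F → G} {f : E → F} {f' : E →L[𝕜] F}
    {x : E} (hg : DifferentiableAt 𝕜 (Function.uncurry g) (x, f x)) (hf : HasFDerivAt f f' x) :
    HasFDerivAt (fun y => g y (f y))
      (fderiv 𝕜 (fun y => g y (f x)) x + (fderiv 𝕜 (g x) (f x)).comp f') x := by
  set D := fderiv 𝕜 (Function.uncurry g) (x, f x)
  have hD : HasFDerivAt (Function.uncurry g) D (x, f x) := hg.hasFDerivAt
  have hleft : fderiv 𝕜 (fun y => g y (f x)) x = D.comp (inl 𝕜 E F) := by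
    have h := hD.comp x (hasFDerivAt_prodMk_left (𝕜 := 𝕜) x (f x))
    exact h.fderiv
  have hright : fderiv 𝕜 (g x) (f x) = D.comp (inr 𝕜 E F) :=
    (hD.comp (f x) (hasFDerivAt_prodMk_right x (f x))).fderiv
  have hsplit : (ContinuousLinearMap.id 𝕜 E).prod f' = inl 𝕜 E F + (inr 𝕜 E F).comp f' := by
    ext v <;> simp
  rw [hleft, hright, comp_assoc, ← comp_add, ← hsplit]
  exact hD.comp x ((hasFDerivAt_id x).prodMk hf)

def sgdJacobian (H : F →L[𝕜] F) (M : E →L[𝕜] F) (α : 𝕜) : ℕ → E →L[𝕜] F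
  | 0 => 0
  | i + 1 => sgdJacobian H M α i - α • (M + H.comp (sgdJacobian H M α i))

variable {g : E → F → F} {x₀ : E} {y₀ : F} {α : 𝕜} {w : ℕ → E → F}

theorem hasFDerivAt_sgd_iterate (hg : DifferentiableAt 𝕜 (Function.uncurry g) (x₀, y₀))
    (hfix : g x₀ y₀ = 0) (hw0 : w 0 = fun _ => y₀)
    (hrec : ∀ i x, w (i + 1) x = w i x - α • g x (w i x)) (i : ℕ) :
    HasFDerivAt (w i)
      (sgdJacobian (fderiv 𝕜 (g x₀) y₀) (fderiv 𝕜 (fun x => g x y₀) x₀) α i) x₀ := by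
  induction i with
  | zero => rw [hw0]; exact hasFDerivAt_const y₀ x₀
  | succ i ih =>
    have hval := sgd_iterate_apply_eq hfix hw0 hrec i
    have hstep := hasFDerivAt_comp_prodMk_of_differentiableAt (hval ▸ hg) ih
    rw [hval] at hstep
    rw [show w (i + 1) = _ from funext (hrec i)]
    exact ih.sub (hstep.const_smul α)

end Calculus

theorem isUnit_of_norm_one_sub_smul_lt_one {𝕜 R : Type*} [CommSemiring 𝕜] [NormedRing R]
    [HasSummableGeomSeries R] [Algebra 𝕜 R] {a : R} {c : 𝕜} (h : ‖1 - c • a‖ < 1) : IsUnit a := by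
  have hca : IsUnit (algebraMap 𝕜 R c * a) := by
    rw [← Algebra.smul_def, ← sub_sub_cancel 1 (c • a)]
    exact isUnit_one_sub_of_norm_lt_one h
  exact ((Algebra.commute_algebraMap_left c a).isUnit_mul_iff.mp hca).2

section Convergence

variable {𝕜 : Type*} [NontriviallyNormedField 𝕜]
  {E F : Type*} [NormedAddCommGroup E] [NormedSpace 𝕜 E] [NormedAddCommGroup F] [NormedSpace 𝕜 F]

theorem tendsto_of_sub_succ_eq_comp {T : F →L[𝕜] F} (hT : ‖T‖ < 1) {D : ℕ → E →L[𝕜] F}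
    {D' : E →L[𝕜] F} (h : ∀ i, D (i + 1) - D' = T.comp (D i - D')) :
    Tendsto D atTop (𝓝 D') := by
  have herr : ∀ i, D i - D' = (T ^ i).comp (D 0 - D') := by
    intro i
    induction i with
    | zero => rw [pow_zero, one_def, id_comp]
    | succ i ih => rw [h, ih, pow_succ', mul_def, comp_assoc]
  have hlim : Tendsto (fun i => (T ^ i).comp (D 0 - D')) atTop
      (𝓝 ((0 : F →L[𝕜] F).comp (D 0 - D'))) :=
    ((continuous_id.clm_comp continuous_const).tendsto _).comp
      (tendsto_pow_atTop_nhds_zero_of_norm_lt_one hT)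
  rw [zero_comp] at hlim
  rw [← tendsto_sub_nhds_zero_iff]
  exact (tendsto_congr herr).mpr hlim

theorem tendsto_sgdJacobian [CompleteSpace F] {H : F →L[𝕜] F} (M : E →L[𝕜] F) {α : 𝕜}
    (hcontr : ‖1 - α • H‖ < 1) :
    Tendsto (sgdJacobian H M α) atTop (𝓝 (-(Ring.inverse H).comp M)) := by
  have hfixed : H.comp (-(Ring.inverse H).comp M) = -M := by
    rw [comp_neg, ← comp_assoc, ← mul_def,
      Ring.mul_inverse_cancel H (isUnit_of_norm_one_sub_smul_lt_one hcontr), one_def, id_comp]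
  refine tendsto_of_sub_succ_eq_comp hcontr fun i => ?_
  rw [sgdJacobian, sub_comp, one_def, id_comp, smul_comp, comp_sub, hfixed]
  module

end Convergence

theorem differentiable_uncurry_gradient {E F : Type*} [NormedAddCommGroup E] [NormedSpace ℝ E]
    [NormedAddCommGroup F] [InnerProductSpace ℝ F] [CompleteSpace F] {L : E × F → ℝ}
    (hL : ContDiff ℝ 2 L) :
    Differentiable ℝ (fun p : E × F => gradient (fun y => L (p.1, y)) p.2) := by
  have hpartial : ∀ p : E × F,
      fderiv ℝ (fun y => L (p.1, y)) p.2 = (fderiv ℝ L p).comp (inr ℝ E F) := fun p =>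
    ((hL.differentiable (by norm_num) p).hasFDerivAt.comp p.2
      (hasFDerivAt_prodMk_right p.1 p.2)).fderiv
  simp only [gradient, hpartial]
  exact (InnerProductSpace.toDual ℝ F).symm.differentiable.comp
    (((hL.fderiv_right (m := 1) le_rfl).differentiable one_ne_zero).clm_comp
      (differentiable_const _))

theorem neumann_sgd_limit_lr_general (m n : ℕ)
    (LT : EuclideanSpace ℝ (Fin m) × EuclideanSpace ℝ (Fin n) → ℝ)
    (hLT : ContDiff ℝ 2 LT)
    (g : EuclideanSpace ℝ (Fin m) → EuclideanSpace ℝ (Fin n) → EuclideanSpace ℝ (Fin n))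
    (hg : ∀ l w, g l w = gradient (fun w' => LT (l, w')) w)
    (α : ℝ)
    (l₀ : EuclideanSpace ℝ (Fin m)) (wstar : EuclideanSpace ℝ (Fin n))
    (hfix : g l₀ wstar = 0)
    (w : ℕ → EuclideanSpace ℝ (Fin m) → EuclideanSpace ℝ (Fin n))
    (hw0 : w 0 = fun _ => wstar)
    (hrec : ∀ i l, w (i + 1) l = w i l - α • g l (w i l))
    (hcontr : ‖(1 : EuclideanSpace ℝ (Fin n) →L[ℝ] EuclideanSpace ℝ (Fin n)) -
        α • fderiv ℝ (g l₀) wstar‖ < 1) :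
    IsUnit (fderiv ℝ (g l₀) wstar) ∧
      Tendsto (fun i => fderiv ℝ (w (i + 1)) l₀) atTop
        (𝓝 (-((Ring.inverse (fderiv ℝ (g l₀) wstar)).comp
          (fderiv ℝ (fun l => g l wstar) l₀)))) := by
  have hg_diff : Differentiable ℝ (Function.uncurry g) := by
    rw [show Function.uncurry g = _ from funext fun p => hg p.1 p.2]
    exact differentiable_uncurry_gradient hLT
  have hderiv : ∀ i, fderiv ℝ (w i) l₀ = sgdJacobian (fderiv ℝ (g l₀) wstar)
      (fderiv ℝ (fun l => g l wstar) l₀) α i := fun i =>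
    (hasFDerivAt_sgd_iterate (hg_diff _) hfix hw0 hrec i).fderiv
  refine ⟨isUnit_of_norm_one_sub_smul_lt_one hcontr, ?_⟩
  simp only [hderiv]
  exact (tendsto_sgdJacobian _ hcontr).comp (tendsto_add_atTop_nat 1)

/-- **Learning-rate-scaled Neumann-SGD, limit.**  Starting unrolled SGD with learning rate
`α > 0` at a fixed point `w₀*` of the training gradient, if `‖I - α • H‖ < 1` then `H` is
invertible and `D w_{i+1}(l₀) → -H⁻¹ ∘ M`, independently of `α`. -/
theorem neumann_sgd_limit_lr (m n : ℕ)
    (LT : EuclideanSpace ℝ (Fin m) × EuclideanSpace ℝ (Fin n) → ℝ)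
    (hLT : ContDiff ℝ 2 LT)
    (g : EuclideanSpace ℝ (Fin m) → EuclideanSpace ℝ (Fin n) → EuclideanSpace ℝ (Fin n))
    (hg : ∀ l w, g l w = gradient (fun w' => LT (l, w')) w)
    (α : ℝ) (hα : 0 < α)
    (l₀ : EuclideanSpace ℝ (Fin m)) (wstar : EuclideanSpace ℝ (Fin n))
    (hfix : g l₀ wstar = 0)
    (w : ℕ → EuclideanSpace ℝ (Fin m) → EuclideanSpace ℝ (Fin n))
    (hw0 : w 0 = fun _ => wstar)
    (hrec : ∀ i l, w (i + 1) l = w i l - α • g l (w i l))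
    (hcontr : ‖(1 : EuclideanSpace ℝ (Fin n) →L[ℝ] EuclideanSpace ℝ (Fin n)) -
        α • fderiv ℝ (g l₀) wstar‖ < 1) :
    IsUnit (fderiv ℝ (g l₀) wstar) ∧
      Tendsto (fun i => fderiv ℝ (w (i + 1)) l₀) atTop
        (𝓝 (-((Ring.inverse (fderiv ℝ (g l₀) wstar)).comp
          (fderiv ℝ (fun l => g l wstar) l₀)))) :=
  neumann_sgd_limit_lr_general m n LT hLT g hg α l₀ wstar hfix w hw0 hrec hcontr
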